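/- For every real r with 1/√2 ≤ r ≤ 1, the function x ↦ A(r,x) on the interval [0, 1/2] attains its maximum at a unique point x₀(r), and x₀(r) lies in the open interval (0, 1/2). -/

import Mathlib

open Set

/-- `A r x = (1/2)·x·√(3 − 4x − 4x²) + (1/2)·√(r² − x²)`. -/
noncomputable def A (r x : ℝ) : ℝ :=
  1 / 2 * x * Real.sqrt (3 - 4 * x - 4 * x ^ 2) + 1 / 2 * Real.sqrt (r ^ 2 - x ^ 2)

/-- The first derivative of `A r` on `(0, 1/2)`. -/
noncomputable def Aux.F (r x : ℝ) : ℝ :=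
  1 / 2 * (3 - 6 * x - 8 * x ^ 2) / Real.sqrt (3 - 4 * x - 4 * x ^ 2)
    - 1 / 2 * x / Real.sqrt (r ^ 2 - x ^ 2)

/-- The second derivative of `A r` on `(0, 1/2)`. -/
noncomputable def Aux.G (r x : ℝ) : ℝ :=
  1 / 2 * (-12 - 24 * x + 48 * x ^ 2 + 32 * x ^ 3)
      / ((3 - 4 * x - 4 * x ^ 2) * Real.sqrt (3 - 4 * x - 4 * x ^ 2))
    - 1 / 2 * r ^ 2 / ((r ^ 2 - x ^ 2) * Real.sqrt (r ^ 2 - x ^ 2))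

lemma Aux.hasDerivAt_A (r : ℝ) (hr2 : 1/2 ≤ r^2) {x : ℝ} (hx : x ∈ Ioo (0:ℝ) (1/2)) :
    HasDerivAt (A r) (Aux.F r x) x := by
  obtain ⟨h0, h1⟩ := hx
  have hq : 0 < 3 - 4 * x - 4 * x ^ 2 := by nlinarith
  have hp : 0 < r ^ 2 - x ^ 2 := by nlinarith
  have hsq : 0 < Real.sqrt (3 - 4 * x - 4 * x ^ 2) := Real.sqrt_pos.2 hq
  have hsp : 0 < Real.sqrt (r ^ 2 - x ^ 2) := Real.sqrt_pos.2 hp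
  have hq' : HasDerivAt (fun y : ℝ => 3 - 4 * y - 4 * y ^ 2) (-4 - 8 * x) x := by
    have h := ((hasDerivAt_const x (3:ℝ)).sub ((hasDerivAt_id x).const_mul 4)).sub
      ((hasDerivAt_pow 2 x).const_mul 4)
    refine h.congr_deriv ?_
    · norm_num; ring
  have hp' : HasDerivAt (fun y : ℝ => r ^ 2 - y ^ 2) (-(2 * x)) x := by
    have h := (hasDerivAt_const x (r^2)).sub (hasDerivAt_pow 2 x)
    refine h.congr_deriv ?_
    · norm_num
  have hsq' := hq'.sqrt (ne_of_gt hq)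
  have hsp' := hp'.sqrt (ne_of_gt hp)
  have h1' : HasDerivAt (fun y : ℝ => 1 / 2 * y) (1/2 : ℝ) x := by
    simpa using (hasDerivAt_id x).const_mul (1/2 : ℝ)
  have htot := (h1'.mul hsq').add (hsp'.const_mul (1/2 : ℝ))
  have hqs : Real.sqrt (3 - 4 * x - 4 * x ^ 2) * Real.sqrt (3 - 4 * x - 4 * x ^ 2)
      = 3 - 4 * x - 4 * x ^ 2 := Real.mul_self_sqrt hq.le
  refine htot.congr_deriv (Eq.symm ?_)
  unfold Aux.F
  set s := Real.sqrt (3 - 4 * x - 4 * x ^ 2) with hs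
  set t := Real.sqrt (r ^ 2 - x ^ 2) with ht
  rw [show (3 - 6*x - 8*x^2 : ℝ) = s * s - 2*x - 4*x^2 by rw [hqs]; ring]
  field_simp
  ring

lemma Aux.hasDerivAt_F (r : ℝ) (hr2 : 1/2 ≤ r^2) {x : ℝ} (hx : x ∈ Ioo (0:ℝ) (1/2)) :
    HasDerivAt (Aux.F r) (Aux.G r x) x := by
  obtain ⟨h0, h1⟩ := hx
  have hq : 0 < 3 - 4 * x - 4 * x ^ 2 := by nlinarith
  have hp : 0 < r ^ 2 - x ^ 2 := by nlinarith
  have hsq : 0 < Real.sqrt (3 - 4 * x - 4 * x ^ 2) := Real.sqrt_pos.2 hq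
  have hsp : 0 < Real.sqrt (r ^ 2 - x ^ 2) := Real.sqrt_pos.2 hp
  have hq' : HasDerivAt (fun y : ℝ => 3 - 4 * y - 4 * y ^ 2) (-4 - 8 * x) x := by
    have h := ((hasDerivAt_const x (3:ℝ)).sub ((hasDerivAt_id x).const_mul 4)).sub
      ((hasDerivAt_pow 2 x).const_mul 4)
    refine h.congr_deriv ?_
    · norm_num; ring
  have hp' : HasDerivAt (fun y : ℝ => r ^ 2 - y ^ 2) (-(2 * x)) x := by
    have h := (hasDerivAt_const x (r^2)).sub (hasDerivAt_pow 2 x)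
    refine h.congr_deriv ?_
    · norm_num
  have hsq' := hq'.sqrt (ne_of_gt hq)
  have hsp' := hp'.sqrt (ne_of_gt hp)
  have hnum1 : HasDerivAt (fun y : ℝ => 1 / 2 * (3 - 6 * y - 8 * y ^ 2))
      (1 / 2 * (-6 - 16 * x)) x := by
    have h := (((hasDerivAt_const x (3:ℝ)).sub ((hasDerivAt_id x).const_mul 6)).sub
      ((hasDerivAt_pow 2 x).const_mul 8)).const_mul (1/2 : ℝ)
    refine h.congr_deriv ?_
    · norm_num; ring
  have hnum2 : HasDerivAt (fun y : ℝ => 1 / 2 * y) (1/2 : ℝ) x := by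
    simpa using (hasDerivAt_id x).const_mul (1/2 : ℝ)
  have htot := (hnum1.div hsq' (ne_of_gt hsq)).sub (hnum2.div hsp' (ne_of_gt hsp))
  have hqs : Real.sqrt (3 - 4 * x - 4 * x ^ 2) * Real.sqrt (3 - 4 * x - 4 * x ^ 2)
      = 3 - 4 * x - 4 * x ^ 2 := Real.mul_self_sqrt hq.le
  have hps : Real.sqrt (r ^ 2 - x ^ 2) * Real.sqrt (r ^ 2 - x ^ 2) = r ^ 2 - x ^ 2 :=
    Real.mul_self_sqrt hp.le
  have hfun : (fun y => 1 / 2 * (3 - 6 * y - 8 * y ^ 2) / Real.sqrt (3 - 4 * y - 4 * y ^ 2)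
      - 1 / 2 * y / Real.sqrt (r ^ 2 - y ^ 2)) = Aux.F r := rfl
  replace htot : HasDerivAt (Aux.F r) _ x := htot
  refine htot.congr_deriv (Eq.symm ?_)
  unfold Aux.G
  set s := Real.sqrt (3 - 4 * x - 4 * x ^ 2) with hs
  set t := Real.sqrt (r ^ 2 - x ^ 2) with ht
  rw [show (3 - 4 * x - 4 * x ^ 2 : ℝ) = s * s from hqs.symm,
      show (r ^ 2 - x ^ 2 : ℝ) = t * t from hps.symm,
      show (-12 - 24 * x + 48 * x ^ 2 + 32 * x ^ 3 : ℝ)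
        = (-6 - 16 * x) * (s * s) + (3 - 6 * x - 8 * x ^ 2) * (2 + 4 * x) by
          rw [hqs]; ring,
      show (r ^ 2 : ℝ) = t * t + x ^ 2 by rw [hps]; ring]
  field_simp
  ring

lemma Aux.G_neg (r : ℝ) (hr2 : 1/2 ≤ r^2) {x : ℝ} (hx : x ∈ Ioo (0:ℝ) (1/2)) :
    Aux.G r x < 0 := by
  obtain ⟨h0, h1⟩ := hx
  have hq : 0 < 3 - 4 * x - 4 * x ^ 2 := by nlinarith
  have hp : 0 < r ^ 2 - x ^ 2 := by nlinarith
  have hsq : 0 < Real.sqrt (3 - 4 * x - 4 * x ^ 2) := Real.sqrt_pos.2 hq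
  have hsp : 0 < Real.sqrt (r ^ 2 - x ^ 2) := Real.sqrt_pos.2 hp
  have hN : (-12 - 24 * x + 48 * x ^ 2 + 32 * x ^ 3 : ℝ) < 0 := by nlinarith
  have hr0 : 0 < r ^ 2 := by linarith
  unfold Aux.G
  have hterm1 : 1 / 2 * (-12 - 24 * x + 48 * x ^ 2 + 32 * x ^ 3)
      / ((3 - 4 * x - 4 * x ^ 2) * Real.sqrt (3 - 4 * x - 4 * x ^ 2)) < 0 := by
    apply div_neg_of_neg_of_pos (by linarith) (mul_pos hq hsq)
  have hterm2 : 0 < 1 / 2 * r ^ 2 / ((r ^ 2 - x ^ 2) * Real.sqrt (r ^ 2 - x ^ 2)) := by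
    apply div_pos (by linarith) (mul_pos hp hsp)
  linarith

lemma Aux.continuous_A (r : ℝ) : Continuous (A r) := by
  unfold A
  fun_prop

lemma Aux.strictConcave (r : ℝ) (hr2 : 1/2 ≤ r^2) :
    StrictConcaveOn ℝ (Icc (0:ℝ) (1/2)) (A r) := by
  apply strictConcaveOn_of_deriv2_neg (convex_Icc _ _) (Aux.continuous_A r).continuousOn
  intro x hx
  rw [interior_Icc] at hx
  have hev : deriv (A r) =ᶠ[nhds x] Aux.F r := by
    filter_upwards [Ioo_mem_nhds hx.1 hx.2] with y hy
    exact (Aux.hasDerivAt_A r hr2 hy).deriv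
  have h2 : deriv (deriv (A r)) x = Aux.G r x := by
    rw [hev.deriv_eq]
    exact (Aux.hasDerivAt_F r hr2 hx).deriv
  show deriv^[2] (A r) x < 0
  rw [show deriv^[2] (A r) = deriv (deriv (A r)) from rfl, h2]
  exact Aux.G_neg r hr2 hx

theorem stmt_8 (r : ℝ) (hr : (Real.sqrt 2)⁻¹ ≤ r) (hr1 : r ≤ 1) :
    (∃! x₀ : ℝ, x₀ ∈ Set.Icc (0 : ℝ) (1 / 2) ∧
        ∀ x ∈ Set.Icc (0 : ℝ) (1 / 2), A r x ≤ A r x₀) ∧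
    (∀ x₀ : ℝ, x₀ ∈ Set.Icc (0 : ℝ) (1 / 2) →
        (∀ x ∈ Set.Icc (0 : ℝ) (1 / 2), A r x ≤ A r x₀) →
        x₀ ∈ Set.Ioo (0 : ℝ) (1 / 2)) := by
  have hs2 : (0:ℝ) < Real.sqrt 2 := Real.sqrt_pos.2 (by norm_num)
  have hsq2 : Real.sqrt 2 ^ 2 = 2 := Real.sq_sqrt (by norm_num)
  have h27 : Real.sqrt 2 ≤ 10/7 := by nlinarith [Real.sqrt_nonneg 2]
  have hr7 : (7/10:ℝ) ≤ r := by
    refine le_trans ?_ hr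
    calc (7/10:ℝ) = (10/7:ℝ)⁻¹ := by norm_num
    _ ≤ (Real.sqrt 2)⁻¹ := by
        apply inv_anti₀ hs2 h27
  have hr0 : (0:ℝ) < r := by linarith
  have hr2 : 1/2 ≤ r^2 := by
    have h : ((Real.sqrt 2)⁻¹)^2 ≤ r^2 := by
      apply pow_le_pow_left₀ (by positivity) hr
    rw [inv_pow, hsq2] at h
    norm_num at h
    linarith
  -- key comparison : A r (3/10) beats the endpoints
  have hval : Real.sqrt (3 - 4 * (3/10) - 4 * (3/10) ^ 2) = 6/5 := by
    rw [show (3 - 4 * (3/10:ℝ) - 4 * (3/10) ^ 2) = (6/5)^2 by norm_num, Real.sqrt_sq]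
    norm_num
  have hA310 : A r (3/10) = 9/50 + 1/2 * Real.sqrt (r^2 - 9/100) := by
    unfold A
    rw [hval]
    norm_num
  have hA0 : A r 0 = r / 2 := by
    unfold A
    rw [show (r^2 - 0^2 : ℝ) = r^2 by ring, Real.sqrt_sq hr0.le]
    ring
  have hA12 : A r (1/2) = 1/2 * Real.sqrt (r^2 - 1/4) := by
    unfold A
    rw [show (3 - 4 * (1/2:ℝ) - 4 * (1/2:ℝ)^2 : ℝ) = 0 by norm_num, Real.sqrt_zero,
      show (r^2 - (1/2:ℝ)^2 : ℝ) = r^2 - 1/4 by norm_num]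
    ring
  have hlt0 : A r 0 < A r (3/10) := by
    rw [hA0, hA310]
    have h1 : r - 9/25 < Real.sqrt (r^2 - 9/100) := by
      rw [show (r^2 - 9/100 : ℝ) = (r^2 - 9/100) from rfl]
      have h2 : (r - 9/25)^2 < r^2 - 9/100 := by nlinarith
      nlinarith [Real.sq_sqrt (show (0:ℝ) ≤ r^2 - 9/100 by nlinarith),
        Real.sqrt_nonneg (r^2 - 9/100)]
    linarith
  have hlt12 : A r (1/2) < A r (3/10) := by
    rw [hA12, hA310]
    have h1 : Real.sqrt (r^2 - 1/4) ≤ Real.sqrt (r^2 - 9/100) :=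
      Real.sqrt_le_sqrt (by linarith)
    linarith
  have h310mem : (3/10:ℝ) ∈ Icc (0:ℝ) (1/2) := by norm_num
  have hconc := Aux.strictConcave r hr2
  -- Part 2 : any maximizer is interior
  have part2 : ∀ x₀ : ℝ, x₀ ∈ Set.Icc (0 : ℝ) (1 / 2) →
      (∀ x ∈ Set.Icc (0 : ℝ) (1 / 2), A r x ≤ A r x₀) →
      x₀ ∈ Set.Ioo (0 : ℝ) (1 / 2) := by
    intro x₀ hx₀ hmax
    have h310 := hmax (3/10) h310mem
    constructor
    · rcases lt_or_eq_of_le hx₀.1 with h | h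
      · exact h
      · exfalso; rw [← h] at h310; linarith
    · rcases lt_or_eq_of_le hx₀.2 with h | h
      · exact h
      · exfalso; rw [h] at h310; linarith
  refine ⟨?_, part2⟩
  -- Existence
  obtain ⟨x₀, hx₀mem, hx₀max⟩ := isCompact_Icc.exists_isMaxOn
    (nonempty_Icc.2 (by norm_num : (0:ℝ) ≤ 1/2)) (Aux.continuous_A r).continuousOn
  have hmax : ∀ x ∈ Set.Icc (0:ℝ) (1/2), A r x ≤ A r x₀ := fun x hx => hx₀max hx
  refine ⟨x₀, ⟨hx₀mem, hmax⟩, ?_⟩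
  rintro y ⟨hymem, hymax⟩
  by_contra hne
  have hval_eq : A r y = A r x₀ := le_antisymm (hmax y hymem) (hymax x₀ hx₀mem)
  have hmid := hconc.2 hymem hx₀mem hne (by norm_num : (0:ℝ) < 1/2)
    (by norm_num : (0:ℝ) < 1/2) (by norm_num)
  have hmidmem : (1/2 : ℝ) • y + (1/2 : ℝ) • x₀ ∈ Icc (0:ℝ) (1/2) :=
    (convex_Icc _ _) hymem hx₀mem (by norm_num) (by norm_num) (by norm_num)
  have := hmax _ hmidmem
  rw [hval_eq] at hmid
  simp only [smul_eq_mul] at hmid this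
  linarith
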